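/- Define S = -2KL + 2KM - 2LM and |Ric|^2 = 4K^2L^2 + 4K^2M^2 + 4L^2M^2. For (K,L,M) satisfying equation (*) with S ≠ 0 and S^2 ≠ |Ric|^2, the quantity λ^2 := S^3 / (8(S^2 - |Ric|^2)) is nonnegative, i.e., S^3 and S^2 - |Ric|^2 have the same sign. -/
import Mathlib


/-- The sextic polynomial (*) from the paper. -/
def P (K L M : ℝ) : ℝ :=
  -K^2 * L * (L - M)^2 * M + L^3 * M^3 + K * L^2 * M^2 * (M - L)
    + K^3 * (L - M) * (L + M)^2

/-- Abstract sign lemma: with `s = a+c`, `b`, `d = a-c` coming from the Ricci data,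
the product `uv` is positive. -/
lemma aux_pos (s b d A uv : ℝ) (hs : s ≠ 0) (hb : b ≠ 0) (hu : s - b ≠ 0) (hA0 : A ≠ 0)
    (hF : b^3 + s*b^2 - s^2*b = s*d^2)
    (hA : b*(s-b)*(s+b)^2 = 4*s*A^2)
    (huv : 4*uv*s = (s-b)*(b^3 + s*b^2 + 3*s^2*b - s^3)) : 0 < uv := by
  set t : ℝ := b / s with ht_def
  have est : s * t = b := by rw [ht_def]; field_simp
  have ht0 : t ≠ 0 := div_ne_zero hb hs
  have ht1 : (1 : ℝ) - t ≠ 0 := by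
    intro h
    apply hu
    have h2 : s * (1 - t) = s - b := by linear_combination -est
    rw [h, mul_zero] at h2
    linarith
  have hg : s^2 * (t^3 + t^2 - t) = d^2 :=
    mul_left_cancel₀ hs (by
      linear_combination (s^2*t^2 + s*t*b + b^2 + s^2*t + s*b - s^2) * est + hF)
  have hs2 : 0 < s^2 := by positivity
  have hgnn : 0 ≤ t^3 + t^2 - t := by
    by_contra h
    push_neg at h
    nlinarith [hg, sq_nonneg d]
  have habc : s^3 * (t * (1 - t) * (1 + t)^2) = 4 * A^2 :=
    mul_left_cancel₀ hs (by
      linear_combination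
        (s^3 + s^2*(s*t + b) - s*(s^2*t^2 + s*t*b + b^2) - (s*t + b)*(s^2*t^2 + b^2)) * est + hA)
  have hX : 0 < s^3 * (t * (1 - t) * (1 + t)^2) := by
    rw [habc]; positivity
  have ht1' : (1 : ℝ) + t ≠ 0 := by
    intro h
    rw [show (1:ℝ) + t = 0 from h] at hX
    simp at hX
  have huv2 : 4 * uv = s^3 * ((1 - t) * (t^3 + t^2 + 3*t - 1)) :=
    mul_left_cancel₀ hs (by
      linear_combination huv +
        ((s*t + b)*(s^2*t^2 + b^2) + 2*s^2*(s*t + b) - 4*s^3) * est)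
  have htq : 0 < t * (t^3 + t^2 + 3*t - 1) := by
    rcases ht0.lt_or_gt with ht | ht
    · have h1 : 0 < t^2 + t + 3 := by nlinarith [sq_nonneg (t + 1/2)]
      have hq : t^3 + t^2 + 3*t - 1 < 0 := by nlinarith [mul_neg_of_neg_of_pos ht h1]
      exact mul_pos_of_neg_of_neg ht hq
    · have h2 : 0 ≤ t^2 + t - 1 := by
        rcases le_or_gt 0 (t^2 + t - 1) with h | h
        · exact h
        · exfalso; nlinarith [hgnn, mul_pos ht ht]
      have hq : 0 < t^3 + t^2 + 3*t - 1 := by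
        nlinarith [mul_nonneg h2 ht.le, sq_nonneg (2*t - 1)]
      exact mul_pos ht hq
  have h6 : 0 < s^6 * (1 - t)^2 * (1 + t)^2 := by positivity
  have hprod : 0 < s^6 * (1 - t)^2 * (1 + t)^2 * (t * (t^3 + t^2 + 3*t - 1)) :=
    mul_pos h6 htq
  have heq : (4 * uv) * (s^3 * (t * (1 - t) * (1 + t)^2)) =
      s^6 * (1 - t)^2 * (1 + t)^2 * (t * (t^3 + t^2 + 3*t - 1)) := by
    rw [huv2]; ring
  nlinarith [hX, hprod, heq]

theorem stmt_7 (K L M : ℝ)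
    (S : ℝ) (hS : S = -2 * K * L + 2 * K * M - 2 * L * M)
    (ricSq : ℝ) (hric : ricSq = 4 * K^2 * L^2 + 4 * K^2 * M^2 + 4 * L^2 * M^2)
    (hP : P K L M = 0) (hS0 : S ≠ 0) (hne : S^2 ≠ ricSq) :
    0 ≤ S^3 / (8 * (S^2 - ricSq)) := by
  rw [P] at hP
  -- v ≠ 0, hence K*L*M ≠ 0
  have hv : K * L * M * (K + M - L) ≠ 0 := by
    intro h
    apply hne
    have h2 : S ^ 2 - ricSq = -8 * (K * L * M * (K + M - L)) := by
      rw [hS, hric]; ring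
    rw [h] at h2
    linarith
  have hKLM : K * L * M ≠ 0 := fun h => hv (by rw [h]; ring)
  have hb : K * M ≠ 0 := by
    intro h
    apply hKLM
    rw [show K * L * M = (K * M) * L from by ring, h]; ring
  have hF : (K*M)^3 + (L*(K+M))*(K*M)^2 - (L*(K+M))^2*(K*M) = (L*(K+M))*(L*(K-M))^2 := by
    linear_combination (-1 : ℝ) * hP
  have hs : L*(K+M) ≠ 0 := by
    intro h
    apply hb
    rw [h] at hF
    have h3 : (K*M)^3 = 0 := by linarith
    exact pow_eq_zero_iff (n := 3) (by norm_num) |>.mp h3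
  have hu : L*(K+M) - K*M ≠ 0 := by
    intro h
    apply hS0
    have : S = -2 * (L*(K+M) - K*M) := by rw [hS]; ring
    rw [this, h]; ring
  have key : 0 < (K*L - K*M + L*M) * (K*L*M*(K+M-L)) := by
    apply aux_pos (L*(K+M)) (K*M) (L*(K-M)) (K*L*M) _ hs hb hu hKLM hF
    · linear_combination (K*M) * hP
    · linear_combination (L*(K+M) - K*M) * hP
  have hSid : S ^ 3 * (8 * (S ^ 2 - ricSq)) =
      128 * S ^ 2 * ((K*L - K*M + L*M) * (K*L*M*(K+M-L))) := by
    rw [hS, hric]; ring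
  have hnum : 0 ≤ S ^ 3 * (8 * (S ^ 2 - ricSq)) := by
    rw [hSid]
    exact mul_nonneg (by positivity) key.le
  have hden0 : (8 : ℝ) * (S ^ 2 - ricSq) ≠ 0 := by
    intro h
    apply hne
    linarith
  have hrw : S ^ 3 / (8 * (S ^ 2 - ricSq)) =
      S ^ 3 * (8 * (S ^ 2 - ricSq)) / (8 * (S ^ 2 - ricSq)) ^ 2 := by
    rw [div_eq_div_iff hden0 (pow_ne_zero 2 hden0)]; ring
  rw [hrw]
  exact div_nonneg hnum (sq_nonneg _)
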